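/- arXiv:2004.02190 — 9 statements merged into one kernel-verified Lean document; each statement's English description precedes it below -/
import Mathlib

section
/- For every prime p and every natural number n ≥ 1, the general linear group GL_n(ZMod p) contains an element of order p^n − 1 (a Singer cycle). -/
/-!
The unit group of `GaloisField p n` is cyclic of order `p ^ n - 1`. This field is an
`n`-dimensional space over `ZMod p` on which it acts faithfully by multiplication, so the matrix
of multiplication by a generator of the unit group is a Singer cycle.
-/

open Matrix

theorem orderOf_units_map_leftMulMatrix {R S ι : Type*} [CommRing R] [Ring S] [Algebra R S]
    [Fintype ι] [DecidableEq ι] (b : Module.Basis ι R S) (u : Sˣ) :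
    orderOf (Units.map (Algebra.leftMulMatrix b).toMonoidHom u) = orderOf u :=
  orderOf_injective _ (Units.map_injective (Algebra.leftMulMatrix_injective b)) u

theorem FiniteField.exists_orderOf_units_eq_card_sub_one (K : Type*) [Field K] [Finite K] :
    ∃ ζ : Kˣ, orderOf ζ = Nat.card K - 1 := by
  obtain ⟨ζ, hζ⟩ := IsCyclic.exists_ofOrder_eq_natCard (α := Kˣ)
  exact ⟨ζ, hζ.trans (Nat.card_units K)⟩

theorem FiniteField.exists_orderOf_GL_eq_card_sub_one (F K : Type*) [Field F] [Field K]
    [Finite K] [Algebra F K] {n : ℕ} (hn : Module.finrank F K = n) :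
    ∃ g : GL (Fin n) F, orderOf g = Nat.card K - 1 := by
  obtain ⟨ζ, hζ⟩ := exists_orderOf_units_eq_card_sub_one K
  let b := (Module.finBasis F K).reindex (finCongr hn)
  exact ⟨_, (orderOf_units_map_leftMulMatrix b ζ).trans hζ⟩

/-- For every prime `p` and every `n ≥ 1`, the general linear group `GL n (ZMod p)`
contains a Singer cycle, i.e. an element of order `p ^ n - 1`. -/
theorem exists_singer_cycle (p n : ℕ) (hp : p.Prime) (hn : 1 ≤ n) :
    ∃ g : GL (Fin n) (ZMod p), orderOf g = p ^ n - 1 := by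
  have : Fact p.Prime := ⟨hp⟩
  have hn0 : n ≠ 0 := by omega
  rw [← GaloisField.card p n hn0]
  exact FiniteField.exists_orderOf_GL_eq_card_sub_one (ZMod p) (GaloisField p n)
    (GaloisField.finrank p hn0)
end

section
/- For every prime p, every natural number n ≥ 1, and every element g of GL_n(ZMod p), the order of g is at most p^n − 1; that is, the Singer cycles are precisely the elements of maximal order in GL_n(ZMod p). -/
/-!
The powers of `g` lie in the subalgebra `𝔽_p[g]` of the matrix algebra. By Cayley–Hamilton
every element of `𝔽_p[g]` is a polynomial in `g` of degree `< n`, so `𝔽_p[g]` has at most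
`p ^ n` elements. The powers of `g` form a group of units of this finite ring, which misses `0`.
-/

open Matrix
open scoped MatrixGroups

open Polynomial

section AdjoinSingleton

variable {K A : Type*} [CommRing K] [Ring A] [Algebra K A] {x : A} {p : K[X]}

instance [Finite K] (d : ℕ) : Finite K[X]_d :=
  .of_equiv _ (degreeLTEquiv K d).toEquiv.symm

lemma natCard_degreeLT [Finite K] (d : ℕ) : Nat.card K[X]_d = Nat.card K ^ d := by
  rw [Nat.card_congr (degreeLTEquiv K d).toEquiv, Nat.card_fun, Nat.card_fin]

theorem Algebra.coe_adjoin_singleton_eq_image_degreeLT [Nontrivial K] (hp : p.Monic)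
    (hx : aeval x p = 0) :
    (Algebra.adjoin K {x} : Set A) = aeval x '' (K[X]_p.natDegree : Set K[X]) := by
  rw [Algebra.adjoin_singleton_eq_range_aeval, AlgHom.coe_range]
  refine (Set.range_subset_iff.2 fun q => ?_).antisymm (Set.image_subset_range _ _)
  exact ⟨q %ₘ p, mem_degreeLT.2 ((degree_modByMonic_lt q hp).trans_le degree_le_natDegree),
    aeval_modByMonic_eq_self_of_root hx⟩

theorem orderOf_lt_natCard_pow_natDegree [Finite K] [Nontrivial A] (hp : p.Monic)
    (hx : aeval x p = 0) : orderOf x < Nat.card K ^ p.natDegree := by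
  have : Nontrivial K := (algebraMap K A).domain_nontrivial
  have hfin : (K[X]_p.natDegree : Set K[X]).Finite :=
    @Set.toFinite _ _ (inferInstanceAs (Finite K[X]_p.natDegree))
  have himage := Algebra.coe_adjoin_singleton_eq_image_degreeLT hp hx
  have : Finite (Algebra.adjoin K {x}) := by
    change Finite (Algebra.adjoin K {x} : Set A)
    exact himage ▸ (hfin.image _).to_subtype
  let x' : Algebra.adjoin K {x} := ⟨x, Algebra.self_mem_adjoin_singleton K x⟩
  calc orderOf x = orderOf x' := orderOf_submonoid (H := (Algebra.adjoin K {x}).toSubmonoid) x'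
    _ < Nat.card (Algebra.adjoin K {x}) := orderOf_lt_card x'
    _ = Nat.card (aeval x '' (K[X]_p.natDegree : Set K[X])) :=
      congrArg (Nat.card ∘ Set.Elem) himage
    _ ≤ Nat.card K[X]_p.natDegree := Nat.card_image_le hfin
    _ = Nat.card K ^ p.natDegree := natCard_degreeLT _

end AdjoinSingleton

theorem Matrix.orderOf_lt_natCard_pow {K n : Type*} [CommRing K] [Finite K] [Nontrivial K]
    [Fintype n] [DecidableEq n] [Nonempty n] (M : Matrix n n K) :
    orderOf M < Nat.card K ^ Fintype.card n :=
  M.charpoly_natDegree_eq_dim ▸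
    orderOf_lt_natCard_pow_natDegree M.charpoly_monic M.aeval_self_charpoly

/-- For every prime `p`, every `n ≥ 1`, and every `g : GL n (ZMod p)`, the order of `g`
is at most `p ^ n - 1`; so the Singer cycles are exactly the elements of maximal order. -/
theorem orderOf_le_singer (p n : ℕ) (hp : p.Prime) (hn : 1 ≤ n)
    (g : GL (Fin n) (ZMod p)) : orderOf g ≤ p ^ n - 1 := by
  have : Fact p.Prime := ⟨hp⟩
  have : Nonempty (Fin n) := ⟨⟨0, hn⟩⟩
  have h := (g : Matrix (Fin n) (Fin n) (ZMod p)).orderOf_lt_natCard_pow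
  rw [orderOf_units, Nat.card_zmod, Fintype.card_fin] at h
  omega
end

section
/- Let p be a prime, n ≥ 1, and let g ∈ GL_n(ZMod p) have order p^n − 1. Then the cyclic group generated by g acts freely on the nonzero vectors: for every integer k and every nonzero vector v ∈ (ZMod p)^n, if g^k • v = v then (p^n − 1) divides k (equivalently g^k = 1). -/
/-!
Let `M` be the matrix of a Singer cycle `g`. By Cayley–Hamilton the commutative algebra `𝔽_q[M]`
is spanned by `1, M, …, M ^ (n - 1)`, so it has at most `q ^ n` elements, while its unit group
contains the `q ^ n - 1` powers of `M`. Hence every nonzero element of `𝔽_q[M]` is a unit, i.e.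
`𝔽_q[M]` is a field. If `g ^ k ≠ 1` then `M ^ k - 1` is a nonzero element of this field, hence
invertible, so it kills no nonzero vector.
-/

open Matrix Polynomial
open scoped MatrixGroups

theorem Algebra.natCard_adjoin_singleton_le {R A : Type*} [CommRing R] [Nontrivial R] [Finite R]
    [Ring A] [Algebra R A] {x : A} {p : R[X]} (hp : p.Monic) (hx : aeval x p = 0) :
    Nat.card (Algebra.adjoin R {x}) ≤ Nat.card R ^ p.natDegree := by
  let e := (degreeLTEquiv R p.natDegree).toEquiv
  have : Finite (degreeLT R p.natDegree) := .of_equiv _ e.symm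
  let f : degreeLT R p.natDegree → Algebra.adjoin R {x} :=
    fun q ↦ ⟨aeval x (q : R[X]), aeval_mem_adjoin_singleton R x⟩
  have hf : f.Surjective := by
    rintro ⟨y, hy⟩
    obtain ⟨q, rfl⟩ := (Algebra.adjoin_singleton_eq_range_aeval R x ▸ hy :)
    refine ⟨⟨q %ₘ p, mem_degreeLT.mpr ?_⟩, Subtype.ext (aeval_modByMonic_eq_self_of_root hx)⟩
    exact (degree_modByMonic_lt q hp).trans_eq (degree_eq_natDegree hp.ne_zero)
  calc Nat.card (Algebra.adjoin R {x}) ≤ Nat.card (degreeLT R p.natDegree) :=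
        Nat.card_le_card_of_surjective f hf
    _ = Nat.card R ^ p.natDegree := by rw [Nat.card_congr e, Nat.card_fun, Nat.card_fin]

theorem isUnit_of_ne_zero_of_natCard_le {R : Type*} [Ring R] [Finite R]
    (hcard : Nat.card R ≤ Nat.card Rˣ + 1) {x : R} (hx : x ≠ 0) : IsUnit x := by
  classical
  have : Nontrivial R := nontrivial_of_ne x 0 hx
  have hsplit : Nat.card R = 1 + Nat.card {y : R // y ≠ 0} := by
    rw [← Nat.card_congr (Equiv.sumCompl (· = (0 : R))), Nat.card_sum, Nat.card_unique]
  let f : Rˣ → {y : R // y ≠ 0} := fun u ↦ ⟨u, u.ne_zero⟩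
  have hf : f.Injective := fun u v h ↦ Units.ext (congrArg Subtype.val h)
  obtain ⟨u, hu⟩ := (hf.bijective_of_nat_card_le (by omega)).2 ⟨x, hx⟩
  exact ⟨u, congrArg Subtype.val hu⟩

theorem Units.val_zpow_mem_adjoin {R A : Type*} [CommSemiring R] [Semiring A] [Algebra R A]
    {g : Aˣ} (hg : IsOfFinOrder g) (k : ℤ) : ((g ^ k : Aˣ) : A) ∈ Algebra.adjoin R {(g : A)} := by
  obtain ⟨m, hm⟩ := hg.mem_powers_iff_mem_zpowers.mpr (Subgroup.zpow_mem_zpowers g k)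
  rw [← hm, Units.val_pow_eq_pow_val]
  exact pow_mem (Algebra.self_mem_adjoin_singleton R _) m

namespace Matrix.GeneralLinearGroup

variable {K ι : Type*} [Field K] [Fintype K] [Fintype ι] [DecidableEq ι]

theorem isUnit_of_mem_adjoin_of_ne_zero {g : GL ι K}
    (hg : orderOf g = Fintype.card K ^ Fintype.card ι - 1) {x : Matrix ι ι K}
    (hx : x ∈ Algebra.adjoin K {(g : Matrix ι ι K)}) (hx0 : x ≠ 0) : IsUnit x := by
  set R := Algebra.adjoin K {(g : Matrix ι ι K)}
  let g' : R := ⟨g, Algebra.self_mem_adjoin_singleton K _⟩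
  have horder : orderOf g' = orderOf g := by
    rw [← orderOf_units, ← orderOf_injective R.val.toMonoidHom Subtype.val_injective]
    rfl
  have hfin : IsOfFinOrder g' := orderOf_pos_iff.mp (horder ▸ orderOf_pos g)
  have hcard : Nat.card R ≤ Nat.card Rˣ + 1 := calc
    Nat.card R ≤ Fintype.card K ^ Fintype.card ι := by
      simpa [charpoly_natDegree_eq_dim, Nat.card_eq_fintype_card] using
        Algebra.natCard_adjoin_singleton_le (charpoly_monic _)
          (aeval_self_charpoly (g : Matrix ι ι K))
    _ = orderOf hfin.unit + 1 := by
      rw [← orderOf_units, hfin.val_unit, horder, hg,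
        Nat.sub_add_cancel (Nat.one_le_pow _ _ Fintype.card_pos)]
    _ ≤ Nat.card Rˣ + 1 := by grw [orderOf_le_card]
  have hx0' : (⟨x, hx⟩ : R) ≠ 0 := fun h ↦ hx0 (congrArg Subtype.val h)
  exact (isUnit_of_ne_zero_of_natCard_le hcard hx0').map R.val

theorem zpow_eq_one_of_mulVec_eq_self {g : GL ι K}
    (hg : orderOf g = Fintype.card K ^ Fintype.card ι - 1) {k : ℤ} {v : ι → K} (hv : v ≠ 0)
    (hfix : (↑(g ^ k) : Matrix ι ι K) *ᵥ v = v) : g ^ k = 1 := by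
  by_contra hk
  have hunit : IsUnit ((↑(g ^ k) : Matrix ι ι K) - 1) :=
    isUnit_of_mem_adjoin_of_ne_zero hg
      (sub_mem (Units.val_zpow_mem_adjoin (isOfFinOrder_of_finite g) k) (one_mem _))
      (sub_ne_zero.mpr (Units.val_eq_one.not.mpr hk))
  refine hv (mulVec_injective_iff_isUnit.mpr hunit ?_)
  rw [sub_mulVec, hfix, one_mulVec, sub_self, mulVec_zero]

end Matrix.GeneralLinearGroup

theorem singer_cycle_free_general (p n : ℕ) (hp : p.Prime)
    (g : GL (Fin n) (ZMod p)) (hg : orderOf g = p ^ n - 1)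
    (k : ℤ) (v : Fin n → ZMod p) (hv : v ≠ 0)
    (hfix : ((g ^ k : GL (Fin n) (ZMod p)) : Matrix (Fin n) (Fin n) (ZMod p)).mulVec v = v) :
    ((p ^ n - 1 : ℕ) : ℤ) ∣ k := by
  have : Fact p.Prime := ⟨hp⟩
  rw [← hg, orderOf_dvd_iff_zpow_eq_one]
  have hg' : orderOf g = Fintype.card (ZMod p) ^ Fintype.card (Fin n) - 1 := by
    rwa [ZMod.card, Fintype.card_fin]
  exact GeneralLinearGroup.zpow_eq_one_of_mulVec_eq_self hg' hv hfix

/-- A Singer cycle `g` in `GL n (ZMod p)` generates a cyclic group acting freely on the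
nonzero vectors: if `g ^ k` fixes a nonzero vector then `p ^ n - 1 ∣ k`, i.e. `g ^ k = 1`. -/
theorem singer_cycle_free (p n : ℕ) (hp : p.Prime) (hn : 1 ≤ n)
    (g : GL (Fin n) (ZMod p)) (hg : orderOf g = p ^ n - 1)
    (k : ℤ) (v : Fin n → ZMod p) (hv : v ≠ 0)
    (hfix : ((g ^ k : GL (Fin n) (ZMod p)) : Matrix (Fin n) (Fin n) (ZMod p)).mulVec v = v) :
    ((p ^ n - 1 : ℕ) : ℤ) ∣ k :=
  singer_cycle_free_general p n hp g hg k v hv hfix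
end

section
/- Let p be a prime, n ≥ 1, and let g ∈ GL_n(ZMod p) have order p^n − 1. Then the cyclic group generated by g acts transitively on the nonzero vectors of (ZMod p)^n: for all nonzero v, w ∈ (ZMod p)^n there exists a natural number k with g^k • v = w. -/
/-! By Cayley–Hamilton the subalgebra `K[g]` of matrices has dimension at most `n`, hence at
most `q ^ n` elements. It contains `0` and the `q ^ n - 1` distinct powers of `g`, so it consists
of exactly these, and every nonzero element of `K[g]` is invertible. For `v ≠ 0` the map
`a ↦ a v` is therefore injective on `K[g]`, and by counting it is onto `K ^ n`. -/

open Matrix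
open scoped MatrixGroups

open Module Polynomial Set Algebra

section
variable {K A : Type*} [Field K] [Ring A] [Algebra K A]

theorem finrank_adjoin_singleton_le_natDegree {x : A} {f : K[X]} (hf : f.Monic)
    (hfx : aeval x f = 0) : finrank K (adjoin K {x}) ≤ f.natDegree := by
  classical
  calc finrank K (adjoin K {x})
      = finrank K (Submodule.span K ((Finset.range f.natDegree).image (x ^ ·) : Set A)) := by
        rw [Submodule.span_range_natDegree_eq_adjoin hf hfx]; rfl
    _ ≤ ((Finset.range f.natDegree).image (x ^ ·)).card := finrank_span_finset_le_card _
    _ ≤ f.natDegree := Finset.card_image_le.trans_eq (Finset.card_range _)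

theorem Units.ncard_insert_zero_range_pow [Nontrivial A] (u : Aˣ) (hu : IsOfFinOrder u) :
    (insert 0 (range ((u : A) ^ ·))).ncard = orderOf u + 1 := by
  have hrange : range ((u : A) ^ ·) = Units.val '' (Submonoid.powers u : Set Aˣ) := by
    ext; simp [Submonoid.mem_powers_iff]
  have hzero : (0 : A) ∉ Units.val '' (Submonoid.powers u : Set Aˣ) := by
    rintro ⟨v, -, hv⟩
    exact v.ne_zero hv
  rw [hrange, ncard_insert_of_notMem hzero (hu.finite_powers.image _),
    ncard_image_of_injective _ Units.val_injective, ← Nat.card_coe_set_eq,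
    SetLike.coe_sort_coe, Nat.card_submonoidPowers]

theorem Units.coe_adjoin_singleton_eq_insert_zero_range_pow [Finite K] [FiniteDimensional K A]
    [Nontrivial A] (u : Aˣ) {d : ℕ} (hd : finrank K (adjoin K {(u : A)}) ≤ d)
    (hu : orderOf u = Nat.card K ^ d - 1) :
    (adjoin K {(u : A)} : Set A) = insert 0 (range ((u : A) ^ ·)) := by
  have : Finite A := Module.finite_of_finite K
  set S := adjoin K {(u : A)}
  have hsub : insert 0 (range ((u : A) ^ ·)) ⊆ S :=
    insert_subset S.zero_mem (range_subset_iff.2 (S.pow_mem (subset_adjoin rfl)))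
  refine (eq_of_subset_of_ncard_le hsub ?_ (toFinite _)).symm
  calc (S : Set A).ncard = Nat.card K ^ finrank K S := by
        rw [← Nat.card_coe_set_eq, SetLike.coe_sort_coe, Module.natCard_eq_pow_finrank (K := K)]
    _ ≤ Nat.card K ^ d := Nat.pow_le_pow_right Nat.card_pos hd
    _ = orderOf u + 1 := by rw [hu, Nat.sub_add_cancel (Nat.one_le_pow _ _ Nat.card_pos)]
    _ = _ := (u.ncard_insert_zero_range_pow (isOfFinOrder_of_finite u)).symm

end

theorem Matrix.finrank_adjoin_singleton_le {K ι : Type*} [Field K] [Fintype ι] [DecidableEq ι]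
    (M : Matrix ι ι K) : finrank K (adjoin K {M}) ≤ Fintype.card ι :=
  (finrank_adjoin_singleton_le_natDegree M.charpoly_monic M.aeval_self_charpoly).trans_eq
    M.charpoly_natDegree_eq_dim

theorem Matrix.GeneralLinearGroup.exists_pow_mulVec_eq {K ι : Type*} [Field K] [Finite K]
    [Fintype ι] [DecidableEq ι] (g : GL ι K) (hg : orderOf g = Nat.card K ^ Fintype.card ι - 1)
    {v w : ι → K} (hv : v ≠ 0) (hw : w ≠ 0) :
    ∃ k : ℕ, ((g ^ k : GL ι K) : Matrix ι ι K) *ᵥ v = w := by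
  obtain ⟨i, -⟩ := Function.ne_iff.1 hv
  have : Nonempty ι := ⟨i⟩
  set S := adjoin K {(g : Matrix ι ι K)}
  have hS :=
    g.coe_adjoin_singleton_eq_insert_zero_range_pow (Matrix.finrank_adjoin_singleton_le _) hg
  have hmem : ∀ a : S, a = 0 ∨ ∃ k : ℕ, (a : Matrix ι ι K) = ↑(g ^ k) := by
    intro a
    have ha : (a : Matrix ι ι K) ∈ (S : Set _) := a.2
    rw [hS] at ha
    rcases ha with h | ⟨k, hk⟩
    · exact Or.inl (Subtype.ext h)
    · exact Or.inr ⟨k, by rw [Units.val_pow_eq_pow_val]; exact hk.symm⟩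
  have hinj : Function.Injective fun a : S ↦ (a : Matrix ι ι K) *ᵥ v := by
    intro a b hab
    rcases hmem (a - b) with h | ⟨k, hk⟩
    · exact sub_eq_zero.1 h
    · refine absurd ?_ hv
      have hk0 : ((g ^ k : GL ι K) : Matrix ι ι K) *ᵥ v = 0 := by
        rw [← hk, Subalgebra.coe_sub, sub_mulVec, sub_eq_zero]; exact hab
      simpa [mulVec_mulVec] using congrArg (((g ^ k)⁻¹ : GL ι K) : Matrix ι ι K).mulVec hk0
  have hcard : Nat.card (ι → K) = Nat.card S := by
    calc Nat.card (ι → K) = Nat.card K ^ Fintype.card ι := by simp [Nat.card_fun]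
      _ = orderOf g + 1 := by rw [hg, Nat.sub_add_cancel (Nat.one_le_pow _ _ Nat.card_pos)]
      _ = Nat.card S := by
        rw [← g.ncard_insert_zero_range_pow (isOfFinOrder_of_finite g), ← hS,
          ← Nat.card_coe_set_eq, SetLike.coe_sort_coe]
  obtain ⟨a, ha⟩ := (hinj.bijective_of_nat_card_le hcard.le).2 w
  rcases hmem a with rfl | ⟨k, hk⟩
  · exact absurd (ha.symm.trans (zero_mulVec v)) hw
  · exact ⟨k, hk ▸ ha⟩

theorem singer_cycle_transitive_general (p n : ℕ) (hp : p.Prime)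
    (g : GL (Fin n) (ZMod p)) (hg : orderOf g = p ^ n - 1)
    (v w : Fin n → ZMod p) (hv : v ≠ 0) (hw : w ≠ 0) :
    ∃ k : ℕ, ((g ^ k : GL (Fin n) (ZMod p)) : Matrix (Fin n) (Fin n) (ZMod p)).mulVec v = w := by
  have : Fact p.Prime := ⟨hp⟩
  exact g.exists_pow_mulVec_eq (by rwa [Nat.card_zmod, Fintype.card_fin]) hv hw

/-- A Singer cycle `g` in `GL n (ZMod p)` generates a cyclic group acting transitively on
the nonzero vectors of `(ZMod p) ^ n`. -/
theorem singer_cycle_transitive (p n : ℕ) (hp : p.Prime) (hn : 1 ≤ n)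
    (g : GL (Fin n) (ZMod p)) (hg : orderOf g = p ^ n - 1)
    (v w : Fin n → ZMod p) (hv : v ≠ 0) (hw : w ≠ 0) :
    ∃ k : ℕ, ((g ^ k : GL (Fin n) (ZMod p)) : Matrix (Fin n) (Fin n) (ZMod p)).mulVec v = w :=
  singer_cycle_transitive_general p n hp g hg v w hv hw
end

section
/- Let p be a prime and n ≥ 1. If g and h are elements of GL_n(ZMod p), each of order p^n − 1, then the cyclic subgroups ⟨g⟩ and ⟨h⟩ are conjugate in GL_n(ZMod p): there exists x ∈ GL_n(ZMod p) with x⁻¹⟨g⟩x = ⟨h⟩. -/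
/-!
If `g` has order `q ^ n - 1` in `GL n 𝔽_q`, the algebra `𝔽_q[g]` of matrices has at most `q ^ n`
elements (its dimension is the degree of the minimal polynomial of `g`, at most `n`), yet it
contains `0` and the `q ^ n - 1` distinct powers of `g`. So it consists of exactly these, and it is
a field with `q ^ n` elements. For `v ≠ 0` the orbit map `a ↦ a v` is then a bijection
`𝔽_q[g] ≃ 𝔽_q ^ n`. Composing the orbit maps of `g` and `h` with an isomorphism of finite fields
`σ : 𝔽_q[g] ≃ 𝔽_q[h]` yields `x` with `x g x⁻¹ = σ g`, a nonzero element of `𝔽_q[h]`, hence a power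
of `h`; having the order of `h`, it generates `⟨h⟩`.
-/

open Matrix Polynomial
open scoped MatrixGroups Algebra

theorem FiniteField.nonempty_algEquiv_of_natCard_eq {F A B : Type*} [Field F] [Field A] [Field B]
    [Algebra F A] [Algebra F B] [Finite A] [Finite B] (h : Nat.card A = Nat.card B) :
    Nonempty (A ≃ₐ[F] B) := by
  have := Fintype.ofFinite A
  have := Fintype.ofFinite B
  have hB := FiniteField.isSplittingField_sub B F
  rw [Fintype.card_eq_nat_card, ← h, ← Fintype.card_eq_nat_card] at hB
  exact ⟨(IsSplittingField.algEquiv A (X ^ Fintype.card A - X)).trans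
    (IsSplittingField.algEquiv B _).symm⟩

theorem Subalgebra.isField_of_forall_isUnit {R A : Type*} [CommRing R] [Ring A] [Algebra R A]
    [Nontrivial A] (S : Subalgebra R A) [Finite S] (hS : ∀ a ∈ S, a ≠ 0 → IsUnit a) :
    IsField S := by
  have : NoZeroDivisors S := ⟨fun {a b} hab => or_iff_not_imp_left.2 fun ha =>
    Subtype.ext ((hS a a.2 (by simpa using ha)).mul_right_eq_zero.1 (congrArg Subtype.val hab))⟩
  have : IsDomain S := NoZeroDivisors.to_isDomain S
  exact Finite.isDomain_to_isField S

theorem Matrix.exists_conj_eq_of_algEquiv {R ι : Type*} [CommRing R] [Fintype ι] [DecidableEq ι]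
    {A B : Subalgebra R (Matrix ι ι R)} (σ : A ≃ₐ[R] B) {v w : ι → R}
    (hv : Function.Bijective fun a : A => (a : Matrix ι ι R) *ᵥ v)
    (hw : Function.Bijective fun b : B => (b : Matrix ι ι R) *ᵥ w) :
    ∃ x : GL ι R, ∀ a : A, (x : Matrix ι ι R) * a * x⁻¹ = σ a := by
  let orbit (S : Subalgebra R (Matrix ι ι R)) (u : ι → R) : S →ₗ[R] ι → R :=
    (mulVecBilin R R).flip u ∘ₗ S.val.toLinearMap
  let eA := LinearEquiv.ofBijective (orbit A v) hv
  let eB := LinearEquiv.ofBijective (orbit B w) hw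
  let e : (ι → R) ≃ₗ[R] ι → R := eA.symm ≪≫ₗ σ.toLinearEquiv ≪≫ₗ eB
  have he_orbit : ∀ c : A, e (eA c) = eB (σ c) := fun c => by simp [e]
  have hA : ∀ a c : A, (a : Matrix ι ι R) *ᵥ eA c = eA (a * c) := fun a c =>
    mulVec_mulVec _ _ _
  have hB : ∀ a c : B, (a : Matrix ι ι R) *ᵥ eB c = eB (a * c) := fun a c =>
    mulVec_mulVec _ _ _
  have he : ∀ (a : A) u, e (a *ᵥ u) = (σ a : Matrix ι ι R) *ᵥ e u := by
    intro a u
    obtain ⟨c, rfl⟩ := eA.surjective u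
    rw [hA, he_orbit, he_orbit, hB, map_mul]
  let x : GL ι R :=
    GeneralLinearGroup.toLin.symm ((LinearMap.GeneralLinearGroup.generalLinearEquiv R _).symm e)
  have hx : ∀ u, (x : Matrix ι ι R) *ᵥ u = e u :=
    LinearMap.toMatrix'_mulVec (e : (ι → R) →ₗ[R] ι → R)
  refine ⟨x, fun a => ?_⟩
  have hxa : (x : Matrix ι ι R) * a = σ a * x := by
    rw [ext_iff_mulVec]
    intro u
    simp only [← mulVec_mulVec, hx, he]
  rw [hxa, mul_assoc, Units.mul_inv, mul_one]

section SingerCycle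

variable {K ι : Type*} [Field K] [Finite K] [Fintype ι] [DecidableEq ι]

theorem Matrix.natCard_adjoin_le (M : Matrix ι ι K) :
    Nat.card K[M] ≤ Nat.card K ^ Fintype.card ι := by
  set d := (minpoly K M).natDegree
  have hspan : Subalgebra.toSubmodule K[M] ≤
      Submodule.span K (Set.range fun i : Fin d => M ^ (i : ℕ)) := by
    intro y hy
    rw [Subalgebra.mem_toSubmodule, Algebra.adjoin_singleton_eq_range_aeval] at hy
    obtain ⟨f, rfl⟩ := hy
    exact (Matrix.isIntegral M).mem_span_pow ⟨f, rfl⟩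
  have hd : d ≤ Fintype.card ι := by
    simpa [Matrix.charpoly_natDegree_eq_dim] using
      natDegree_le_of_dvd (Matrix.minpoly_dvd_charpoly M) (Matrix.charpoly_monic M).ne_zero
  calc Nat.card K[M] = Nat.card K ^ Module.finrank K K[M] := Module.natCard_eq_pow_finrank
    _ ≤ Nat.card K ^ Fintype.card ι := by
      gcongr
      · exact Nat.card_pos
      calc Module.finrank K K[M] = Module.finrank K (Subalgebra.toSubmodule K[M]) := rfl
        _ ≤ Module.finrank K (Submodule.span K (Set.range fun i : Fin d => M ^ (i : ℕ))) :=
          Submodule.finrank_mono hspan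
        _ ≤ d := (finrank_range_le_card (R := K) fun i : Fin d => M ^ (i : ℕ)).trans_eq
          (Fintype.card_fin d)
        _ ≤ Fintype.card ι := hd

namespace Matrix.GeneralLinearGroup

def IsSingerCycle (g : GL ι K) : Prop :=
  orderOf g = Nat.card K ^ Fintype.card ι - 1

namespace IsSingerCycle

variable {g : GL ι K}

theorem nonempty (hg : g.IsSingerCycle) : Nonempty ι := by
  rw [← Fintype.card_pos_iff, Nat.pos_iff_ne_zero]
  intro hι
  have h_pos := orderOf_pos g
  rw [hg, hι] at h_pos
  simp at h_pos

theorem ncard_insert_zero_powers (hg : g.IsSingerCycle) :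
    (insert 0 ((↑) '' (Submonoid.powers g : Set (GL ι K))) : Set (Matrix ι ι K)).ncard =
      Nat.card K ^ Fintype.card ι := by
  have := hg.nonempty
  have h_zero : (0 : Matrix ι ι K) ∉ (↑) '' (Submonoid.powers g : Set (GL ι K)) :=
    fun ⟨u, _, hu⟩ => u.ne_zero hu
  have h_pos : 0 < Nat.card K ^ Fintype.card ι := pow_pos Nat.card_pos _
  rw [Set.ncard_insert_of_notMem h_zero, Set.ncard_image_of_injective _ Units.val_injective,
    ← Nat.card_coe_set_eq, SetLike.coe_sort_coe, Nat.card_submonoidPowers, hg]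
  omega

theorem coe_adjoin (hg : g.IsSingerCycle) :
    (K[(g : Matrix ι ι K)] : Set (Matrix ι ι K)) =
      insert 0 ((↑) '' (Submonoid.powers g : Set (GL ι K))) := by
  symm
  apply Set.eq_of_subset_of_ncard_le
  · rintro _ (rfl | ⟨_, ⟨k, rfl⟩, rfl⟩)
    · exact zero_mem _
    · simpa using pow_mem (Algebra.self_mem_adjoin_singleton K (g : Matrix ι ι K)) k
  · rw [hg.ncard_insert_zero_powers, ← Nat.card_coe_set_eq, SetLike.coe_sort_coe]
    exact natCard_adjoin_le _
  · exact Set.toFinite _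

theorem natCard_adjoin (hg : g.IsSingerCycle) :
    Nat.card K[(g : Matrix ι ι K)] = Nat.card K ^ Fintype.card ι := by
  rw [← SetLike.coe_sort_coe, Nat.card_coe_set_eq, hg.coe_adjoin, hg.ncard_insert_zero_powers]

theorem exists_mem_powers (hg : g.IsSingerCycle) {a : Matrix ι ι K}
    (ha : a ∈ K[(g : Matrix ι ι K)]) (ha₀ : a ≠ 0) :
    ∃ u ∈ Submonoid.powers g, (u : Matrix ι ι K) = a := by
  rw [← SetLike.mem_coe, hg.coe_adjoin] at ha
  exact ha.resolve_left ha₀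

theorem isField_adjoin (hg : g.IsSingerCycle) : IsField K[(g : Matrix ι ι K)] := by
  have := hg.nonempty
  refine Subalgebra.isField_of_forall_isUnit _ fun a ha ha₀ => ?_
  obtain ⟨u, -, rfl⟩ := hg.exists_mem_powers ha ha₀
  exact u.isUnit

theorem bijective_mulVec (hg : g.IsSingerCycle) {v : ι → K} (hv : v ≠ 0) :
    Function.Bijective fun a : K[(g : Matrix ι ι K)] => (a : Matrix ι ι K) *ᵥ v := by
  refine Function.Injective.bijective_of_nat_card_le (fun a b hab => ?_) ?_
  · by_contra hne
    obtain ⟨u, -, hu⟩ := hg.exists_mem_powers (sub_mem a.2 b.2)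
      (sub_ne_zero.2 (Subtype.coe_injective.ne hne))
    refine hv (mulVec_injective_iff_isUnit.2 u.isUnit ?_)
    rw [hu, sub_mulVec, hab, sub_self, mulVec_zero]
  · rw [hg.natCard_adjoin, Nat.card_fun, Nat.card_eq_fintype_card (α := ι)]

theorem exists_map_conj_zpowers_eq {h : GL ι K} (hg : g.IsSingerCycle)
    (hh : h.IsSingerCycle) :
    ∃ x : GL ι K, (Subgroup.zpowers g).map (MulAut.conj x).toMonoidHom = Subgroup.zpowers h := by
  have := hg.nonempty
  let := hg.isField_adjoin.toField
  let := hh.isField_adjoin.toField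
  obtain ⟨σ⟩ := FiniteField.nonempty_algEquiv_of_natCard_eq (F := K)
    (hg.natCard_adjoin.trans hh.natCard_adjoin.symm)
  have hv : (Pi.single (Classical.arbitrary ι) 1 : ι → K) ≠ 0 := by simp
  obtain ⟨x, hx⟩ :=
    exists_conj_eq_of_algEquiv σ (hg.bijective_mulVec hv) (hh.bijective_mulVec hv)
  let γ : K[(g : Matrix ι ι K)] := ⟨g, Algebra.self_mem_adjoin_singleton K _⟩
  have hγ : σ γ ≠ 0 := (map_ne_zero σ).2 fun h0 => g.ne_zero (congrArg Subtype.val h0)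
  obtain ⟨_, ⟨k, rfl⟩, hxk⟩ := hh.exists_mem_powers (σ γ).2 (by simpa using hγ)
  have hconj : MulAut.conj x g = h ^ k := Units.ext ((hx γ).trans hxk.symm)
  refine ⟨x, ?_⟩
  rw [MonoidHom.map_zpowers, MulEquiv.coe_toMonoidHom, hconj]
  refine Subgroup.eq_of_le_of_card_ge (Subgroup.zpowers_le.2 (Subgroup.npow_mem_zpowers h k)) ?_
  rw [Nat.card_zpowers, Nat.card_zpowers, ← hconj, MulEquiv.orderOf_eq, hg, hh]

end IsSingerCycle

end Matrix.GeneralLinearGroup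

end SingerCycle

theorem singer_cycles_conjugate_general (p n : ℕ) (hp : p.Prime)
    (g h : GL (Fin n) (ZMod p))
    (hg : orderOf g = p ^ n - 1) (hh : orderOf h = p ^ n - 1) :
    ∃ x : GL (Fin n) (ZMod p),
      (Subgroup.zpowers g).map (MulAut.conj x⁻¹).toMonoidHom = Subgroup.zpowers h := by
  have := Fact.mk hp
  have h_singer (u : GL (Fin n) (ZMod p)) (hu : orderOf u = p ^ n - 1) : u.IsSingerCycle := by
    rwa [GeneralLinearGroup.IsSingerCycle, Nat.card_zmod, Fintype.card_fin]
  obtain ⟨x, hx⟩ := (h_singer g hg).exists_map_conj_zpowers_eq (h_singer h hh)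
  exact ⟨x⁻¹, by rwa [inv_inv]⟩

/-- Any two subgroups of `GL n (ZMod p)` generated by Singer cycles are conjugate:
if `g` and `h` both have order `p ^ n - 1`, then some `x` conjugates `⟨g⟩` onto `⟨h⟩`. -/
theorem singer_cycles_conjugate (p n : ℕ) (hp : p.Prime) (hn : 1 ≤ n)
    (g h : GL (Fin n) (ZMod p))
    (hg : orderOf g = p ^ n - 1) (hh : orderOf h = p ^ n - 1) :
    ∃ x : GL (Fin n) (ZMod p),
      (Subgroup.zpowers g).map (MulAut.conj x⁻¹).toMonoidHom = Subgroup.zpowers h :=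
  singer_cycles_conjugate_general p n hp g h hg hh
end

section
/- Let p be a prime, n ≥ 1, and let g ∈ GL_n(ZMod p) have order p^n − 1. Then the centralizer of g in GL_n(ZMod p) is exactly the cyclic subgroup ⟨g⟩ generated by g. -/
/-!
`A = 𝔽_p[g]` has at most `p ^ n` elements by Cayley–Hamilton, while its unit group contains the
`p ^ n - 1` powers of `g`; so every nonzero element of `A` is a unit and `Aˣ = ⟨g⟩`. Hence for
any `v ≠ 0` the map `a ↦ a v` is injective, so onto `𝔽_p ^ n`. A matrix `c` commuting with `g`
commutes with all of `A`, and if `c v = a v` then `c (b v) = b (c v) = a (b v)` for all `b ∈ A`,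
so `c = a ∈ Aˣ = ⟨g⟩`.
-/

open Matrix
open scoped MatrixGroups

open Polynomial

namespace Algebra

theorem mem_range_unitsMap_adjoin_singleton (R : Type*) {M : Type*} [CommSemiring R]
    [Semiring M] [Algebra R M] {g : Mˣ} (hg : IsOfFinOrder g) :
    g ∈ (Units.map (adjoin R {(g : M)}).val.toMonoidHom).range := by
  obtain ⟨u, hu⟩ : IsUnit (⟨g, self_mem_adjoin_singleton R _⟩ : adjoin R {(g : M)}) := by
    refine IsUnit.of_pow_eq_one (n := orderOf g) (Subtype.ext ?_) hg.orderOf_pos.ne'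
    rw [SubmonoidClass.coe_pow, ← Units.val_pow_eq_pow_val, pow_orderOf_eq_one]
    rfl
  exact ⟨u, Units.ext (congrArg Subtype.val hu)⟩

variable {R S : Type*} [CommRing R] [Nontrivial R] [Ring S] [Algebra R S]

theorem adjoin_singleton_le_span_pow {x : S} {q : R[X]} (hq : q.Monic) (hx : aeval x q = 0) :
    Subalgebra.toSubmodule (adjoin R {x}) ≤
      Submodule.span R (Set.range fun i : Fin q.natDegree => x ^ (i : ℕ)) := by
  intro y hy
  rw [Subalgebra.mem_toSubmodule, adjoin_singleton_eq_range_aeval] at hy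
  obtain ⟨f, rfl⟩ := hy
  refine PowerBasis.mem_span_pow'.2
    ⟨f %ₘ q, (degree_modByMonic_lt f hq).trans_le degree_le_natDegree, ?_⟩
  rw [aeval_modByMonic_eq_self_of_root hx]
  rfl

theorem natCard_adjoin_singleton_le_s5 [Finite R] {x : S} {q : R[X]} (hq : q.Monic)
    (hx : aeval x q = 0) : Nat.card (adjoin R {x}) ≤ Nat.card R ^ q.natDegree := by
  set v : Fin q.natDegree → S := fun i => x ^ (i : ℕ)
  have hspan : (Submodule.span R (Set.range v) : Set S) =
      Set.range (Fintype.linearCombination R v) := by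
    rw [← Fintype.range_linearCombination, LinearMap.coe_range]
  calc Nat.card (adjoin R {x}) ≤ Nat.card (Submodule.span R (Set.range v)) :=
        Nat.card_mono (hspan ▸ Set.finite_range _) (adjoin_singleton_le_span_pow hq hx)
    _ ≤ Nat.card (Fin q.natDegree → R) :=
        (Nat.card_congr (Equiv.setCongr hspan)).trans_le (Finite.card_range_le _)
    _ = Nat.card R ^ q.natDegree := by rw [Nat.card_fun, Nat.card_fin]

end Algebra

theorem isUnit_of_ne_zero_of_natCard_le_s5 {M₀ : Type*} [MonoidWithZero M₀] [Nontrivial M₀]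
    [Finite M₀] (hcard : Nat.card M₀ ≤ Nat.card M₀ˣ + 1) {a : M₀} (ha : a ≠ 0) :
    IsUnit a := by
  have hinj : Function.Injective fun o : Option M₀ˣ => o.elim 0 Units.val := by
    rintro (_ | u) (_ | w) h
    · rfl
    · exact absurd h.symm w.ne_zero
    · exact absurd h u.ne_zero
    · exact congrArg some (Units.ext h)
  obtain ⟨_ | u, hu⟩ := (hinj.bijective_of_nat_card_le (by rwa [Finite.card_option])).2 a
  · exact absurd hu.symm ha
  · exact ⟨u, hu⟩

namespace Matrix

variable {ι R : Type*} [Fintype ι] [DecidableEq ι]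

theorem mem_of_forall_commute_of_cyclic [Semiring R] {S : Set (Matrix ι ι R)}
    (hS : ∀ a ∈ S, ∀ b ∈ S, Commute a b) {v : ι → R}
    (hv : ∀ w, ∃ a ∈ S, a *ᵥ v = w)
    {c : Matrix ι ι R} (hc : ∀ a ∈ S, Commute c a) : c ∈ S := by
  obtain ⟨a, ha, hav⟩ := hv (c *ᵥ v)
  have hca : ∀ w, c *ᵥ w = a *ᵥ w := fun w => by
    obtain ⟨b, hb, rfl⟩ := hv w
    calc c *ᵥ (b *ᵥ v) = b *ᵥ (c *ᵥ v) := by rw [mulVec_mulVec, mulVec_mulVec, (hc b hb).eq]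
      _ = a *ᵥ (b *ᵥ v) := by rw [← hav, mulVec_mulVec, mulVec_mulVec, (hS a ha b hb).eq]
  rwa [ext_of_mulVec_single fun i => hca _]

theorem natCard_adjoin_singleton_le_s5 [CommRing R] [Nontrivial R] [Finite R] (M : Matrix ι ι R) :
    Nat.card (Algebra.adjoin R {M}) ≤ Nat.card R ^ Fintype.card ι :=
  charpoly_natDegree_eq_dim M ▸
    Algebra.natCard_adjoin_singleton_le_s5 (charpoly_monic M) (aeval_self_charpoly M)

theorem exists_mem_mulVec_eq_of_isUnit [CommRing R] [Finite R] {A : Subalgebra R (Matrix ι ι R)}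
    (hA : ∀ a : A, a ≠ 0 → IsUnit a) (hcard : Nat.card (ι → R) ≤ Nat.card A)
    {v : ι → R} (hv : v ≠ 0) (w : ι → R) : ∃ a ∈ A, a *ᵥ v = w := by
  have hinj : Function.Injective fun a : A => (a : Matrix ι ι R) *ᵥ v := by
    intro a b hab
    by_contra hne
    obtain ⟨u, hu⟩ := hA (a - b) (sub_ne_zero.2 hne)
    have hker : ((a - b : A) : Matrix ι ι R) *ᵥ v = 0 := by
      rw [Subalgebra.coe_sub, sub_mulVec, sub_eq_zero]
      exact hab
    refine hv ?_
    calc v = ((u⁻¹ * u : Aˣ) : Matrix ι ι R) *ᵥ v := by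
          rw [inv_mul_cancel]; exact (one_mulVec v).symm
      _ = 0 := by rw [Units.val_mul, Subalgebra.coe_mul, ← mulVec_mulVec, hu, hker, mulVec_zero]
  obtain ⟨a, ha⟩ := (hinj.bijective_of_nat_card_le hcard).2 w
  exact ⟨a, a.2, ha⟩

end Matrix

namespace Matrix.GeneralLinearGroup

variable {ι K : Type*} [Fintype ι] [DecidableEq ι] [CommRing K]

theorem centralizer_singleton_le_range_unitsMap_adjoin [Nonempty ι] [Nontrivial K] [Finite K]
    (g : GL ι K) (hunit : ∀ a : Algebra.adjoin K {(g : Matrix ι ι K)}, a ≠ 0 → IsUnit a)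
    (hcard : Nat.card (ι → K) ≤ Nat.card (Algebra.adjoin K {(g : Matrix ι ι K)})) :
    Subgroup.centralizer {g} ≤
      (Units.map (Algebra.adjoin K {(g : Matrix ι ι K)}).val.toMonoidHom).range := by
  intro c hc
  have hcg : Commute (c : Matrix ι ι K) g :=
    congrArg Units.val (Subgroup.mem_centralizer_singleton_iff.1 hc)
  obtain ⟨v, hv⟩ := exists_ne (0 : ι → K)
  have hcA : (c : Matrix ι ι K) ∈ Algebra.adjoin K {(g : Matrix ι ι K)} :=
    mem_of_forall_commute_of_cyclic
      (fun a ha b hb => Algebra.commute_of_mem_adjoin_singleton_of_commute hb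
        (Algebra.commute_of_mem_adjoin_singleton_of_commute ha (Commute.refl _)).symm)
      (exists_mem_mulVec_eq_of_isUnit hunit hcard hv)
      (fun a ha => Algebra.commute_of_mem_adjoin_singleton_of_commute ha hcg)
  obtain ⟨w, hw⟩ := hunit ⟨c, hcA⟩ (fun h => c.ne_zero (congrArg Subtype.val h))
  exact ⟨w, Units.ext (congrArg Subtype.val hw)⟩

theorem centralizer_eq_zpowers_of_orderOf_eq [Nonempty ι] [Nontrivial K] [Finite K] (g : GL ι K)
    (hg : orderOf g = Nat.card K ^ Fintype.card ι - 1) :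
    Subgroup.centralizer {g} = Subgroup.zpowers g := by
  set A := Algebra.adjoin K {(g : Matrix ι ι K)}
  set incl : Aˣ →* GL ι K := Units.map A.val.toMonoidHom
  have hincl : Function.Injective incl := fun a b h =>
    Units.ext (Subtype.ext (congrArg Units.val h))
  have hgA : g ∈ incl.range :=
    Algebra.mem_range_unitsMap_adjoin_singleton K (isOfFinOrder_of_finite g)
  have hcardU : orderOf g ≤ Nat.card Aˣ := by
    obtain ⟨u, hu⟩ := hgA
    rw [← hu, orderOf_injective incl hincl u]
    exact orderOf_le_card
  have hcardA : Nat.card A ≤ _ := natCard_adjoin_singleton_le_s5 (g : Matrix ι ι K)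
  have hcardV : Nat.card (ι → K) = Nat.card K ^ Fintype.card ι := by
    rw [Nat.card_fun, Nat.card_eq_fintype_card (α := ι)]
  have hcardUA := natCard_units_lt A
  have hunit : ∀ a : A, a ≠ 0 → IsUnit a := fun a ha =>
    isUnit_of_ne_zero_of_natCard_le_s5 (by omega) ha
  have hrange : incl.range = Subgroup.zpowers g := by
    refine (Subgroup.eq_of_le_of_card_ge (Subgroup.zpowers_le.2 hgA) ?_).symm
    rw [Nat.card_zpowers, ← Nat.card_congr (incl.ofInjective hincl).toEquiv]
    omega
  have hcardVA : Nat.card (ι → K) ≤ Nat.card A := by omega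
  exact le_antisymm (hrange ▸ centralizer_singleton_le_range_unitsMap_adjoin g hunit hcardVA)
    (Subgroup.zpowers_le.2 (Subgroup.mem_centralizer_singleton_iff.2 rfl))

end Matrix.GeneralLinearGroup

/-- The centralizer of a Singer cycle `g` in `GL n (ZMod p)` is exactly the cyclic
subgroup `⟨g⟩` it generates. -/
theorem singer_cycle_centralizer (p n : ℕ) (hp : p.Prime) (hn : 1 ≤ n)
    (g : GL (Fin n) (ZMod p)) (hg : orderOf g = p ^ n - 1) :
    Subgroup.centralizer {g} = Subgroup.zpowers g := by
  have : Fact p.Prime := ⟨hp⟩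
  have : Nonempty (Fin n) := ⟨⟨0, hn⟩⟩
  exact GeneralLinearGroup.centralizer_eq_zpowers_of_orderOf_eq g
    (by rw [Nat.card_zmod, Fintype.card_fin, hg])
end

section
/- Let p be a prime and n, m ≥ 1. Then GL_n(ZMod p^m), the automorphism group of the homocyclic abelian group (ZMod p^m)^n, contains an element of order p^n − 1. -/
/-!
Multiplication by a generator of the cyclic group `𝔽_{p^n}ˣ` is an element of order `p ^ n - 1`
in `GL_n(𝔽_p)`, after choosing an `𝔽_p`-basis of `𝔽_{p^n}`. Reduction modulo `p` maps
`GL_n(ℤ/p^m)` onto `GL_n(𝔽_p)`: any entrywise lift of an invertible matrix has a determinant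
prime to `p`, hence a unit modulo `p^m`. The order of a lift is a multiple of `p ^ n - 1`, so a
suitable power of it has order exactly `p ^ n - 1`.
-/

open Matrix
open scoped MatrixGroups

theorem exists_orderOf_eq_orderOf_map {G H : Type*} [LeftCancelMonoid G] [Monoid H] [Finite G]
    (f : G →* H) (g : G) : ∃ g' : G, orderOf g' = orderOf (f g) :=
  ⟨g ^ (orderOf g / orderOf (f g)), orderOf_pow_orderOf_div (orderOf_pos g).ne' (orderOf_map_dvd f g)⟩

theorem RingHom.mapMatrix_surjective {n R S : Type*} [Fintype n] [DecidableEq n] [Semiring R]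
    [Semiring S] (f : R →+* S) (hf : Function.Surjective f) :
    Function.Surjective (f.mapMatrix (m := n)) := by
  intro B
  choose g hg using hf
  exact ⟨B.map g, by ext; simp [hg]⟩

instance RingHom.isLocalHom_mapMatrix {n R S : Type*} [Fintype n] [DecidableEq n] [CommRing R]
    [CommRing S] (f : R →+* S) [IsLocalHom f] : IsLocalHom (f.mapMatrix (m := n)) where
  map_nonunit A hA := by
    rw [isUnit_iff_isUnit_det, ← RingHom.map_det] at hA
    exact (isUnit_iff_isUnit_det A).2 (isUnit_of_map_unit f _ hA)

namespace Matrix.GeneralLinearGroup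

theorem map_surjective {n R S : Type*} [Fintype n] [DecidableEq n] [CommRing R] [CommRing S]
    (f : R →+* S) [IsLocalHom f] (hf : Function.Surjective f) :
    Function.Surjective (map (n := n) f) :=
  IsLocalRing.surjective_units_map_of_local_ringHom _ (f.mapMatrix_surjective hf) inferInstance

theorem exists_orderOf_eq_card_sub_one {F K : Type*} [Field F] [Field K] [Finite K]
    [Algebra F K] {n : ℕ} (b : Module.Basis (Fin n) F K) :
    ∃ g : GL (Fin n) F, orderOf g = Nat.card K - 1 := by
  obtain ⟨ζ, hζ⟩ := IsCyclic.exists_generator (α := Kˣ)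
  refine ⟨Units.map (Algebra.leftMulMatrix b).toMonoidHom ζ, ?_⟩
  rw [orderOf_injective _ (Units.map_injective (Algebra.leftMulMatrix_injective b)),
    orderOf_eq_card_of_forall_mem_zpowers hζ, Nat.card_units]

end Matrix.GeneralLinearGroup

instance ZMod.isLocalHom_castHom_prime_pow {p m : ℕ} [Fact p.Prime] (hm : p ∣ p ^ m) :
    IsLocalHom (ZMod.castHom hm (ZMod p)) where
  map_nonunit a ha := by
    rw [ZMod.castHom_apply, ZMod.cast_eq_val, isUnit_iff_ne_zero, ne_eq,
      ZMod.natCast_eq_zero_iff] at ha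
    rw [← ZMod.natCast_zmod_val a, ZMod.isUnit_iff_coprime]
    exact ((Nat.Prime.coprime_iff_not_dvd Fact.out).2 ha).symm.pow_right m

/-- For every prime `p` and `n, m ≥ 1`, the group `GL n (ZMod (p ^ m))` — the automorphism
group of the homocyclic abelian group `(ZMod (p ^ m)) ^ n` — contains an element of order
`p ^ n - 1`. -/
theorem exists_singer_cycle_homocyclic (p n m : ℕ) (hp : p.Prime) (hn : 1 ≤ n) (hm : 1 ≤ m) :
    ∃ g : GL (Fin n) (ZMod (p ^ m)), orderOf g = p ^ n - 1 := by
  have : Fact p.Prime := ⟨hp⟩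
  have hn0 : n ≠ 0 := by omega
  let b := Module.finBasisOfFinrankEq (ZMod p) (GaloisField p n) (GaloisField.finrank p hn0)
  obtain ⟨g, hg⟩ := GeneralLinearGroup.exists_orderOf_eq_card_sub_one b
  rw [GaloisField.card p n hn0] at hg
  let reduce := ZMod.castHom (dvd_pow_self p (by omega : m ≠ 0)) (ZMod p)
  obtain ⟨g', hg'⟩ := GeneralLinearGroup.map_surjective reduce (ZMod.ringHom_surjective reduce) g
  exact hg ▸ hg' ▸ exists_orderOf_eq_orderOf_map _ g'
end

section
/- Let p be a prime, n, m ≥ 1, and let g ∈ GL_n(ZMod p^m) have order p^n − 1. Let Ω = { v ∈ (ZMod p^m)^n : p • v = 0 } be the p-torsion subgroup of Q = (ZMod p^m)^n. Then the cyclic group generated by g acts transitively on the nonzero elements of Ω: for all nonzero v, w ∈ Ω there exists a natural number k with g^k • v = w. -/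
/-!
The kernel of reduction `GL_n(ℤ/p^m) → GL_n(𝔽_p)` has exponent dividing `p^(m-1)`,
because `(1 + p B)^(p^(m-1)) = 1`. As `p^n - 1` is prime to `p`, the reduction `ḡ` of `g`
is again a Singer cycle. The algebra `𝔽_p[ḡ]` is a quotient of `𝔽_p[X]/(χ_ḡ)`, so it has
at most `p^n` elements, while it contains the `p^n - 1` distinct powers of `ḡ`; hence its
nonzero elements are exactly these powers. So `c ↦ c v` is injective on `𝔽_p[ḡ]` for
`v ≠ 0`, and by counting it is onto `𝔽_p^n`. Finally `x ↦ p^(m-1) x` identifies `𝔽_p^n`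
with `Ω`, compatibly with `g` and `ḡ`.
-/

open Matrix

open Finset in
theorem card_insert_zero_image_pow_orderOf {M₀ : Type*} [MonoidWithZero M₀] [Nontrivial M₀]
    [DecidableEq M₀] {a : M₀} (ha : IsOfFinOrder a) :
    #(insert 0 ((range (orderOf a)).image (a ^ ·))) = orderOf a + 1 := by
  rw [card_insert_of_notMem, card_image_of_injOn (by simpa using pow_injOn_Iio_orderOf),
    card_range]
  simp only [mem_image, not_exists, not_and]
  exact fun k _ => (ha.isUnit.pow k).ne_zero

theorem orderOf_add_one_le_card {M₀ : Type*} [MonoidWithZero M₀] [Nontrivial M₀] [Finite M₀]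
    {a : M₀} (ha : IsOfFinOrder a) : orderOf a + 1 ≤ Nat.card M₀ := by
  classical
  have := Fintype.ofFinite M₀
  rw [← card_insert_zero_image_pow_orderOf ha, Nat.card_eq_fintype_card]
  exact Finset.card_le_univ _

theorem exists_pow_eq_of_card_le_orderOf_add_one {M₀ : Type*} [MonoidWithZero M₀] [Finite M₀]
    {a : M₀} (ha : Nat.card M₀ ≤ orderOf a + 1) {x : M₀} (hx : x ≠ 0) :
    ∃ k, a ^ k = x := by
  classical
  have := Fintype.ofFinite M₀
  have : Nontrivial M₀ := ⟨⟨x, 0, hx⟩⟩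
  have hfin : IsOfFinOrder a := by
    rw [← orderOf_pos_iff]
    have := Finite.one_lt_card (α := M₀)
    omega
  have huniv := Finset.eq_univ_of_card _ <| le_antisymm (Finset.card_le_univ _) <| by
    rw [card_insert_zero_image_pow_orderOf hfin, ← Nat.card_eq_fintype_card]; exact ha
  have hmem := huniv ▸ Finset.mem_univ x
  simp only [Finset.mem_insert, hx, Finset.mem_image, false_or] at hmem
  obtain ⟨k, -, hk⟩ := hmem
  exact ⟨k, hk⟩

open Polynomial in
theorem one_add_nsmul_pow_pow_eq_one {R : Type*} [Ring R] {p k : ℕ}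
    (hp : (p : R) ^ (k + 1) = 0) (y : R) : (1 + p • y) ^ p ^ k = 1 := by
  -- In the commutative ring `ℤ[X]`, `p ^ (k + 1) ∣ (1 + p X) ^ p ^ k - 1`; then `X ↦ y`.
  obtain ⟨q, hq⟩ := dvd_sub_pow_of_dvd_sub (R := ℤ[X]) (p := p) (a := 1 + (p : ℤ[X]) * X)
    (b := 1) (by simp) k
  have := congrArg (aeval y) hq
  simp only [map_sub, map_pow, map_add, map_one, map_mul, map_natCast, aeval_X, one_pow] at this
  rw [hp, zero_mul, sub_eq_zero, ← nsmul_eq_mul] at this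
  exact this

theorem MonoidHom.orderOf_map_eq_of_coprime {G H : Type*} [Monoid G] [Monoid H] (φ : G →* H)
    {N : ℕ} (hker : ∀ x, φ x = 1 → x ^ N = 1) {g : G} (hg : (orderOf g).Coprime N) :
    orderOf (φ g) = orderOf g := by
  refine Nat.dvd_antisymm (orderOf_map_dvd φ g) (hg.dvd_of_dvd_mul_right ?_)
  refine orderOf_dvd_of_pow_eq_one ?_
  rw [pow_mul]
  exact hker _ (by rw [map_pow, pow_orderOf_eq_one])

namespace ZMod

theorem exists_eq_mul_of_castHom_eq_zero {d N : ℕ} [NeZero N] (h : d ∣ N) {x : ZMod N}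
    (hx : castHom h (ZMod d) x = 0) : ∃ y, x = d * y := by
  rw [castHom_apply, cast_eq_val, natCast_eq_zero_iff] at hx
  obtain ⟨t, ht⟩ := hx
  exact ⟨t, by rw [← natCast_zmod_val x, ht, Nat.cast_mul]⟩

variable {p k : ℕ} [NeZero p]

theorem exists_eq_pow_mul_of_natCast_mul_eq_zero {x : ZMod (p ^ (k + 1))}
    (hx : (p : ZMod (p ^ (k + 1))) * x = 0) : ∃ y, x = p ^ k * y := by
  rw [← natCast_zmod_val x, ← Nat.cast_mul, natCast_eq_zero_iff] at hx
  obtain ⟨t, ht⟩ :=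
    Nat.dvd_of_mul_dvd_mul_left (NeZero.pos p) ((pow_succ' p k).symm.dvd.trans hx)
  exact ⟨t, by rw [← natCast_zmod_val x, ht, Nat.cast_mul, Nat.cast_pow]⟩

theorem pow_mul_eq_pow_mul_of_castHom_eq {x y : ZMod (p ^ (k + 1))}
    (h : castHom (dvd_pow_self p k.succ_ne_zero) (ZMod p) x =
      castHom (dvd_pow_self p k.succ_ne_zero) (ZMod p) y) :
    (p : ZMod (p ^ (k + 1))) ^ k * x = p ^ k * y := by
  obtain ⟨t, ht⟩ := exists_eq_mul_of_castHom_eq_zero (dvd_pow_self p k.succ_ne_zero)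
    (x := x - y) (by rw [map_sub, h, sub_self])
  rw [← sub_eq_zero, ← mul_sub, ht, ← mul_assoc, ← pow_succ, ← Nat.cast_pow, natCast_self,
    zero_mul]

end ZMod

section Reduction

variable {ι : Type*} {p k : ℕ} [NeZero p]

theorem exists_eq_pow_smul_of_smul_eq_zero {v : ι → ZMod (p ^ (k + 1))} (hv : p • v = 0) :
    ∃ v₀ : ι → ZMod (p ^ (k + 1)), v = p ^ k • v₀ := by
  choose v₀ hv₀ using fun i =>
    ZMod.exists_eq_pow_mul_of_natCast_mul_eq_zero (by simpa using congrFun hv i)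
  exact ⟨v₀, funext fun i => by simp [hv₀ i]⟩

theorem pow_smul_eq_pow_smul_of_castHom_comp_eq {v w : ι → ZMod (p ^ (k + 1))}
    (h : ZMod.castHom (dvd_pow_self p k.succ_ne_zero) (ZMod p) ∘ v =
      ZMod.castHom (dvd_pow_self p k.succ_ne_zero) (ZMod p) ∘ w) :
    p ^ k • v = p ^ k • w :=
  funext fun i => by simpa using ZMod.pow_mul_eq_pow_mul_of_castHom_eq (congrFun h i)

theorem Matrix.GeneralLinearGroup.pow_eq_one_of_map_castHom_eq_one [Fintype ι] [DecidableEq ι]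
    {g : GL ι (ZMod (p ^ (k + 1)))}
    (hg : map (ZMod.castHom (dvd_pow_self p k.succ_ne_zero) (ZMod p)) g = 1) : g ^ p ^ k = 1 := by
  have hentry : ∀ i j, ∃ b : ZMod (p ^ (k + 1)),
      (g : Matrix ι ι _) i j = (1 : Matrix ι ι _) i j + p * b := by
    intro i j
    have hij := congrArg (fun h : GL ι (ZMod p) => (h : Matrix ι ι (ZMod p)) i j) hg
    obtain ⟨b, hb⟩ := ZMod.exists_eq_mul_of_castHom_eq_zero (dvd_pow_self p k.succ_ne_zero)
      (x := (g : Matrix ι ι _) i j - (1 : Matrix ι ι _) i j) (by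
        rw [map_sub, sub_eq_zero]
        convert hij using 1
        · rfl
        · rcases eq_or_ne i j with rfl | hne <;> simp [Matrix.one_apply_ne, *])
    exact ⟨b, by rw [← hb, add_sub_cancel]⟩
  choose B hB using hentry
  have hp_pow : ((p : Matrix ι ι (ZMod (p ^ (k + 1))))) ^ (k + 1) = 0 := by
    rw [← Nat.cast_pow, ← map_natCast (algebraMap (ZMod (p ^ (k + 1))) (Matrix ι ι _)),
      ZMod.natCast_self, map_zero]
  ext1
  rw [Units.val_pow_eq_pow_val, Units.val_one,
    show (g : Matrix ι ι (ZMod (p ^ (k + 1)))) = 1 + p • Matrix.of B by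
      ext i j; simp [hB, nsmul_eq_mul]]
  exact one_add_nsmul_pow_pow_eq_one hp_pow _

end Reduction

theorem Polynomial.Monic.natCard_adjoinRoot {R : Type*} [CommRing R] {g : Polynomial R}
    (hg : g.Monic) : Nat.card (AdjoinRoot g) = Nat.card R ^ g.natDegree := by
  rw [Nat.card_congr (AdjoinRoot.powerBasis' hg).basis.equivFun.toEquiv, Nat.card_fun,
    Nat.card_fin, AdjoinRoot.powerBasis'_dim]

open Polynomial in
theorem Matrix.natCard_adjoin_le_s12 {F ι : Type*} [Field F] [Finite F] [Fintype ι]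
    [DecidableEq ι] (M : Matrix ι ι F) :
    Nat.card (Algebra.adjoin F {M}) ≤ Nat.card F ^ Fintype.card ι := by
  rw [Algebra.adjoin_singleton_eq_range_aeval]
  have hker : ∀ q ∈ Ideal.span {M.charpoly}, (aeval M).rangeRestrict q = 0 := by
    intro q hq
    obtain ⟨r, rfl⟩ := Ideal.mem_span_singleton'.mp hq
    ext1
    simp [Matrix.aeval_self_charpoly]
  have := M.charpoly_monic.finite_adjoinRoot
  have : Finite (AdjoinRoot M.charpoly) := Module.finite_of_finite F
  calc Nat.card (aeval M).range ≤ Nat.card (AdjoinRoot M.charpoly) :=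
        Nat.card_le_card_of_surjective _ (Ideal.Quotient.lift_surjective_of_surjective _ hker
          (aeval M).rangeRestrict_surjective)
    _ = Nat.card F ^ Fintype.card ι := by
        rw [M.charpoly_monic.natCard_adjoinRoot, M.charpoly_natDegree_eq_dim]

theorem Matrix.GeneralLinearGroup.exists_pow_mulVec_eq_of_orderOf_eq {F ι : Type*} [Field F]
    [Finite F] [Fintype ι] [DecidableEq ι] {A : GL ι F}
    (hA : orderOf A = Nat.card F ^ Fintype.card ι - 1) {v w : ι → F} (hv : v ≠ 0)
    (hw : w ≠ 0) : ∃ k : ℕ, (↑(A ^ k) : Matrix ι ι F) *ᵥ v = w := by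
  set K := Algebra.adjoin F {(A : Matrix ι ι F)}
  set a : K := ⟨A, Algebra.self_mem_adjoin_singleton F _⟩
  have ha_pow : ∀ k, ((a ^ k : K) : Matrix ι ι F) = ↑(A ^ k) := fun k => by
    simp [a, Units.val_pow_eq_pow_val]
  have ha : orderOf a = orderOf A := by
    rw [← orderOf_units, ← orderOf_injective K.val.toMonoidHom Subtype.val_injective a]
    rfl
  have : Nonempty ι := not_isEmpty_iff.mp fun _ => hv (Subsingleton.elim _ _)
  have hq : 1 < Nat.card F ^ Fintype.card ι :=
    Nat.one_lt_pow Fintype.card_ne_zero Finite.one_lt_card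
  have hK : Nat.card K ≤ Nat.card F ^ Fintype.card ι := Matrix.natCard_adjoin_le_s12 _
  have hpow : ∀ c : K, c ≠ 0 → ∃ k, a ^ k = c := fun c hc =>
    exists_pow_eq_of_card_le_orderOf_add_one (by omega) hc
  let Φ : K → ι → F := fun c => (c : Matrix ι ι F) *ᵥ v
  have hΦ : Function.Injective Φ := by
    intro c₁ c₂ h
    by_contra hne
    obtain ⟨k, hk⟩ := hpow _ (sub_ne_zero.mpr hne)
    have hAkv : (↑(A ^ k) : Matrix ι ι F) *ᵥ v = 0 := by
      rw [← ha_pow, hk]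
      simp only [Φ] at h
      simp [sub_mulVec, h]
    apply hv
    simpa [mulVec_mulVec] using congrArg ((↑(A ^ k)⁻¹ : Matrix ι ι F) *ᵥ ·) hAkv
  have hΦ_bij : Function.Bijective Φ := hΦ.bijective_of_nat_card_le <| by
    rw [Nat.card_fun, Nat.card_eq_fintype_card (α := ι)]
    have := orderOf_add_one_le_card ((orderOf_pos_iff).mp (by omega : 0 < orderOf a))
    omega
  obtain ⟨c, rfl⟩ := hΦ_bij.surjective w
  obtain ⟨k, rfl⟩ := hpow c (by rintro rfl; simp [Φ] at hw)
  exact ⟨k, by rw [← ha_pow]⟩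

/-- A Singer cycle `g` in `GL n (ZMod (p ^ m))` generates a cyclic group acting
transitively on the nonzero elements of the `p`-torsion subgroup
`Ω = {v ∈ (ZMod (p ^ m)) ^ n : p • v = 0}`. -/
theorem singer_cycle_transitive_on_omega (p n m : ℕ) (hp : p.Prime) (hn : 1 ≤ n) (hm : 1 ≤ m)
    (g : GL (Fin n) (ZMod (p ^ m))) (hg : orderOf g = p ^ n - 1)
    (v w : Fin n → ZMod (p ^ m))
    (hvΩ : p • v = 0) (hwΩ : p • w = 0) (hv : v ≠ 0) (hw : w ≠ 0) :
    ∃ k : ℕ, ((g ^ k : GL (Fin n) (ZMod (p ^ m))) :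
        Matrix (Fin n) (Fin n) (ZMod (p ^ m))).mulVec v = w := by
  obtain ⟨k, rfl⟩ : ∃ k, m = k + 1 := ⟨m - 1, by omega⟩
  have : Fact p.Prime := ⟨hp⟩
  set π := ZMod.castHom (dvd_pow_self p k.succ_ne_zero) (ZMod p)
  have hcop : (p ^ n - 1).Coprime p :=
    (Nat.coprime_self_sub_left (Nat.one_le_pow _ _ hp.pos) |>.mpr (Nat.coprime_one_left _))
      |>.coprime_dvd_right (dvd_pow_self p (by omega))
  have hg_mod_p : orderOf (GeneralLinearGroup.map π g) =
      Nat.card (ZMod p) ^ Fintype.card (Fin n) - 1 := by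
    rw [MonoidHom.orderOf_map_eq_of_coprime _
      (fun _ => GeneralLinearGroup.pow_eq_one_of_map_castHom_eq_one) (hg ▸ hcop.pow_right k),
      hg, Nat.card_zmod, Fintype.card_fin]
  have hreduce : ∀ x : Fin n → ZMod (p ^ (k + 1)), p ^ k • x ≠ 0 → π ∘ x ≠ 0 :=
    fun x hx h0 => hx <| by
      simpa using pow_smul_eq_pow_smul_of_castHom_comp_eq (w := 0) (by simpa using h0)
  obtain ⟨v₀, rfl⟩ := exists_eq_pow_smul_of_smul_eq_zero hvΩ
  obtain ⟨w₀, rfl⟩ := exists_eq_pow_smul_of_smul_eq_zero hwΩ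
  obtain ⟨j, hj⟩ := GeneralLinearGroup.exists_pow_mulVec_eq_of_orderOf_eq hg_mod_p
    (hreduce v₀ hv) (hreduce w₀ hw)
  refine ⟨j, ?_⟩
  rw [mulVec_smul]
  refine pow_smul_eq_pow_smul_of_castHom_comp_eq (funext fun i => ?_)
  rw [← hj, Function.comp_apply, RingHom.map_mulVec, ← map_pow]
  rfl
end

section
/- Let p be a prime and n ≥ 1, and let E be a subgroup of GL_n(ZMod p) whose order is not divisible by p and which contains an element of order p^n − 1. If H is a nontrivial normal subgroup of E, then the only vector v ∈ (ZMod p)^n fixed by every element of H is v = 0. -/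
open Matrix
open scoped MatrixGroups

/-!
If `g ∈ GL_n(F_q)` has order `q ^ n - 1`, the matrix algebra `F_q[g]` has at most `q ^ n`
elements by Cayley–Hamilton, yet at least `q ^ n - 1` units, so it is a field with `q ^ n`
elements. A nonzero `g`-invariant subspace `W` is an `F_q[g]`-submodule, and `r ↦ r w` is
injective on `F_q[g]` for any nonzero `w ∈ W`, so `W` is everything. The subspace of vectors
fixed by a normal subgroup `H` of `E ∋ g` is `g`-invariant, hence `0` unless `H` acts trivially.
-/

section UnitsCount

variable {M : Type*} [MonoidWithZero M]

theorem Units.injective_optionElim_zero [Nontrivial M] :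
    Function.Injective fun o : Option Mˣ => o.elim 0 Units.val := by
  rintro (_ | a) (_ | b) hab
  · rfl
  · exact absurd hab.symm b.ne_zero
  · exact absurd hab a.ne_zero
  · exact congrArg some (Units.ext hab)

variable [Finite M]

theorem Nat.card_units_add_one_le [Nontrivial M] : Nat.card Mˣ + 1 ≤ Nat.card M := by
  simpa [Finite.card_option] using
    Nat.card_le_card_of_injective _ (Units.injective_optionElim_zero (M := M))

theorem isUnit_of_ne_zero_of_card_le_card_units_add_one (h : Nat.card M ≤ Nat.card Mˣ + 1)
    {x : M} (hx : x ≠ 0) : IsUnit x := by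
  have : Nontrivial M := ⟨⟨x, 0, hx⟩⟩
  have hbij : Function.Bijective fun o : Option Mˣ => o.elim 0 Units.val :=
    (Nat.bijective_iff_injective_and_card _).2
      ⟨Units.injective_optionElim_zero, by
        rw [Finite.card_option]
        exact le_antisymm Nat.card_units_add_one_le h⟩
  obtain ⟨_ | u, hu⟩ := hbij.2 x
  · exact absurd hu.symm hx
  · exact hu ▸ u.isUnit

end UnitsCount

namespace Matrix

variable {ι : Type*} [Fintype ι] [DecidableEq ι]

theorem mulVec_mem_of_mem_adjoin_singleton {R : Type*} [CommRing R] {A : Matrix ι ι R}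
    {W : Submodule R (ι → R)} (hW : ∀ w ∈ W, A *ᵥ w ∈ W) {B : Matrix ι ι R}
    (hB : B ∈ Algebra.adjoin R {A}) : ∀ w ∈ W, B *ᵥ w ∈ W := by
  induction hB using Algebra.adjoin_induction with
  | mem x hx => exact (Set.mem_singleton_iff.1 hx) ▸ hW
  | algebraMap c =>
    simpa [Algebra.algebraMap_eq_smul_one, smul_mulVec] using fun w => W.smul_mem c
  | add x y _ _ hx hy => exact fun w hw => (add_mulVec x y w) ▸ W.add_mem (hx w hw) (hy w hw)
  | mul x y _ _ hx hy => exact fun w hw => (mulVec_mulVec w x y) ▸ hx _ (hy w hw)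

variable {K : Type*} [Field K]

theorem finrank_adjoin_singleton_le_s14 (A : Matrix ι ι K) :
    Module.finrank K (Algebra.adjoin K {A}) ≤ Fintype.card ι := by
  have hA : IsIntegral K A := Algebra.IsIntegral.isIntegral A
  have hspan : Subalgebra.toSubmodule (Algebra.adjoin K {A}) ≤
      Submodule.span K (Set.range fun i : Fin (minpoly K A).natDegree => A ^ (i : ℕ)) := by
    intro B hB
    rw [Subalgebra.mem_toSubmodule, Algebra.adjoin_singleton_eq_range_aeval] at hB
    obtain ⟨f, rfl⟩ := hB
    exact hA.mem_span_pow ⟨f, rfl⟩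
  calc Module.finrank K (Algebra.adjoin K {A})
      ≤ Module.finrank K (Submodule.span K
          (Set.range fun i : Fin (minpoly K A).natDegree => A ^ (i : ℕ))) :=
        Submodule.finrank_mono hspan
    _ ≤ (minpoly K A).natDegree :=
        (finrank_range_le_card _).trans_eq (Fintype.card_fin _)
    _ ≤ A.charpoly.natDegree :=
        Polynomial.natDegree_le_of_dvd (minpoly_dvd_charpoly A) A.charpoly_monic.ne_zero
    _ = Fintype.card ι := A.charpoly_natDegree_eq_dim

theorem card_adjoin_singleton_le [Fintype K] (A : Matrix ι ι K) :
    Nat.card (Algebra.adjoin K {A}) ≤ Nat.card K ^ Fintype.card ι := by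
  let := Fintype.ofFinite (Algebra.adjoin K {A})
  rw [Nat.card_eq_fintype_card, Nat.card_eq_fintype_card, Module.card_eq_pow_finrank (K := K)]
  exact Nat.pow_le_pow_right Fintype.card_pos A.finrank_adjoin_singleton_le_s14

end Matrix

namespace Matrix.GeneralLinearGroup

variable {ι : Type*} [Fintype ι] [DecidableEq ι] {K : Type*} [Field K] [Fintype K]

theorem card_le_card_units_adjoin_add_one (g : GL ι K)
    (hg : orderOf g = Nat.card K ^ Fintype.card ι - 1) :
    Nat.card K ^ Fintype.card ι ≤ Nat.card (Algebra.adjoin K {(g : Matrix ι ι K)})ˣ + 1 := by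
  set R := Algebra.adjoin K {(g : Matrix ι ι K)}
  set a : R := ⟨g, Algebra.self_mem_adjoin_singleton K _⟩
  have ha : orderOf a = orderOf g := by
    rw [← orderOf_units, ← orderOf_injective R.val.toMonoidHom Subtype.val_injective a]
    rfl
  have hu : IsUnit a := (orderOf_pos_iff.1 (ha ▸ orderOf_pos g)).isUnit
  have hpos : 0 < Nat.card K ^ Fintype.card ι := Nat.pow_pos Nat.card_pos
  calc Nat.card K ^ Fintype.card ι = orderOf hu.unit + 1 := by
        rw [← orderOf_units, hu.unit_spec, ha, hg]; omega
    _ ≤ Nat.card Rˣ + 1 := Nat.add_le_add_right orderOf_le_card 1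

theorem card_adjoin_of_orderOf_eq [Nonempty ι] (g : GL ι K)
    (hg : orderOf g = Nat.card K ^ Fintype.card ι - 1) :
    Nat.card (Algebra.adjoin K {(g : Matrix ι ι K)}) = Nat.card K ^ Fintype.card ι :=
  le_antisymm (Matrix.card_adjoin_singleton_le _)
    ((card_le_card_units_adjoin_add_one g hg).trans Nat.card_units_add_one_le)

theorem isUnit_of_mem_adjoin_of_orderOf_eq (g : GL ι K)
    (hg : orderOf g = Nat.card K ^ Fintype.card ι - 1) {r : Matrix ι ι K}
    (hr : r ∈ Algebra.adjoin K {(g : Matrix ι ι K)}) (hr0 : r ≠ 0) : IsUnit r :=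
  (isUnit_of_ne_zero_of_card_le_card_units_add_one
    ((Matrix.card_adjoin_singleton_le _).trans (card_le_card_units_adjoin_add_one g hg))
    (x := (⟨r, hr⟩ : Algebra.adjoin K {(g : Matrix ι ι K)}))
    fun h => hr0 (congrArg Subtype.val h)).map (Algebra.adjoin K _).val

theorem eq_bot_or_eq_top_of_orderOf_eq (g : GL ι K)
    (hg : orderOf g = Nat.card K ^ Fintype.card ι - 1) (W : Submodule K (ι → K))
    (hW : ∀ w ∈ W, (g : Matrix ι ι K) *ᵥ w ∈ W) : W = ⊥ ∨ W = ⊤ := by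
  refine or_iff_not_imp_left.2 fun hW0 => ?_
  obtain ⟨w, hwW, hw0⟩ := W.ne_bot_iff.1 hW0
  have : Nonempty ι := by
    by_contra h
    exact hw0 (funext fun i => (not_nonempty_iff.1 h).elim i)
  set R := Algebra.adjoin K {(g : Matrix ι ι K)}
  have hinj : Function.Injective
      fun r : R => (⟨r *ᵥ w, mulVec_mem_of_mem_adjoin_singleton hW r.2 w hwW⟩ : W) := by
    intro r s hrs
    by_contra hne
    have hunit := isUnit_of_mem_adjoin_of_orderOf_eq g hg (R.sub_mem r.2 s.2)
      (sub_ne_zero.2 (Subtype.coe_injective.ne hne))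
    refine hw0 (mulVec_injective_iff_isUnit.2 hunit ?_)
    simpa [sub_mulVec, sub_eq_zero] using congrArg Subtype.val hrs
  have hcard : Nat.card (ι → K) ≤ Nat.card (W : Set (ι → K)) := by
    calc Nat.card (ι → K) = Nat.card R := by
          rw [card_adjoin_of_orderOf_eq g hg, Nat.card_fun, Nat.card_eq_fintype_card (α := ι)]
      _ ≤ Nat.card W := Nat.card_le_card_of_injective _ hinj
  exact SetLike.coe_injective (Set.eq_top_of_card_le_of_finite hcard)

variable {R : Type*} [CommRing R]

def fixedVectors (S : Subgroup (GL ι R)) : Submodule R (ι → R) where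
  carrier := {v | ∀ h ∈ S, (h : Matrix ι ι R) *ᵥ v = v}
  add_mem' hv hw h hh := by rw [mulVec_add, hv h hh, hw h hh]
  zero_mem' _ _ := mulVec_zero _
  smul_mem' c _ hv h hh := by rw [mulVec_smul, hv h hh]

theorem mulVec_mem_fixedVectors {S : Subgroup (GL ι R)} {g : GL ι R}
    (hg : g ∈ Subgroup.normalizer (S : Set (GL ι R))) {v : ι → R} (hv : v ∈ fixedVectors S) :
    (g : Matrix ι ι R) *ᵥ v ∈ fixedVectors S := by
  intro h hh
  have hconj : g⁻¹ * h * g ∈ S := by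
    simpa using (Subgroup.mem_normalizer_iff.1 (inv_mem hg) h).1 hh
  calc (h : Matrix ι ι R) *ᵥ ((g : Matrix ι ι R) *ᵥ v)
      = (g : Matrix ι ι R) *ᵥ (((g⁻¹ * h * g : GL ι R) : Matrix ι ι R) *ᵥ v) := by
        simp [mulVec_mulVec, ← mul_assoc]
    _ = (g : Matrix ι ι R) *ᵥ v := by rw [hv _ hconj]

theorem eq_bot_of_fixedVectors_eq_top {S : Subgroup (GL ι R)} (hS : fixedVectors S = ⊤) :
    S = ⊥ := by
  refine (Subgroup.eq_bot_iff_forall S).2 fun h hh => Units.ext (ext_iff_mulVec.2 fun v => ?_)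
  simpa using (hS ▸ Submodule.mem_top : v ∈ fixedVectors S) h hh

end Matrix.GeneralLinearGroup

theorem normal_subgroup_no_fixed_points_general (p n : ℕ) (hp : p.Prime)
    (E : Subgroup (GL (Fin n) (ZMod p)))
    (g : GL (Fin n) (ZMod p)) (hgE : g ∈ E) (hg : orderOf g = p ^ n - 1)
    (H : Subgroup E) (hHne : H ≠ ⊥) (hHnormal : H.Normal)
    (v : Fin n → ZMod p)
    (hfix : ∀ h : E, h ∈ H →
      ((h : GL (Fin n) (ZMod p)) : Matrix (Fin n) (Fin n) (ZMod p)).mulVec v = v) :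
    v = 0 := by
  have := Fact.mk hp
  set S := H.map E.subtype
  have hgS : g ∈ Subgroup.normalizer (S : Set (GL (Fin n) (ZMod p))) :=
    Subgroup.le_normalizer_map E.subtype
      ⟨⟨g, hgE⟩, H.normalizer_eq_top ▸ Subgroup.mem_top _, rfl⟩
  have hvS : v ∈ GeneralLinearGroup.fixedVectors S := by
    rintro _ ⟨h, hh, rfl⟩
    exact hfix h hh
  rcases GeneralLinearGroup.eq_bot_or_eq_top_of_orderOf_eq g (by simpa [ZMod.card] using hg) _
    (fun w hw => GeneralLinearGroup.mulVec_mem_fixedVectors hgS hw) with hbot | htop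
  · simpa [hbot] using hvS
  · exact absurd ((Subgroup.map_eq_bot_iff_of_injective H E.subtype_injective).1
      (GeneralLinearGroup.eq_bot_of_fixedVectors_eq_top htop)) hHne

/-- Let `E` be a `p'`-subgroup of `GL n (ZMod p)` containing a Singer cycle, and let `H`
be a nontrivial normal subgroup of `E`. Then the only vector of `(ZMod p) ^ n` fixed by
every element of `H` is `0`. -/
theorem normal_subgroup_no_fixed_points (p n : ℕ) (hp : p.Prime) (hn : 1 ≤ n)
    (E : Subgroup (GL (Fin n) (ZMod p))) (hE : ¬ p ∣ Nat.card E)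
    (g : GL (Fin n) (ZMod p)) (hgE : g ∈ E) (hg : orderOf g = p ^ n - 1)
    (H : Subgroup E) (hHne : H ≠ ⊥) (hHnormal : H.Normal)
    (v : Fin n → ZMod p)
    (hfix : ∀ h : E, h ∈ H →
      ((h : GL (Fin n) (ZMod p)) : Matrix (Fin n) (Fin n) (ZMod p)).mulVec v = v) :
    v = 0 :=
  normal_subgroup_no_fixed_points_general p n hp E g hgE hg H hHne hHnormal v hfix
end
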